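/- arXiv:1703.01317 — 4 statements merged into one kernel-verified Lean document; each statement's English description precedes it below -/
import Mathlib

section
/- Let n be a natural number, and let σ and σ' be two pair partitions of Fin (2*n). Then the join σ ⊔ σ' in the lattice of finpartitions of Fin (2*n) has exactly n parts if and only if σ = σ'. -/
open Finset

/-- The setoid on `Fin N` induced by a finpartition of `univ : Finset (Fin N)`:
two elements are related iff they lie in a common part. -/
def Finpartition.toSetoidFin {N : ℕ} (σ : Finpartition (univ : Finset (Fin N))) :
    Setoid (Fin N) where
  r a b := ∃ s ∈ σ.parts, a ∈ s ∧ b ∈ s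
  iseqv :=
    { refl := fun a => by
        obtain ⟨s, hs, ha⟩ := σ.exists_mem (mem_univ a)
        exact ⟨s, hs, ha, ha⟩
      symm := fun h => by
        obtain ⟨s, hs, ha, hb⟩ := h
        exact ⟨s, hs, hb, ha⟩
      trans := fun h h' => by
        obtain ⟨s, hs, ha, hb⟩ := h
        obtain ⟨t, ht, hb', hc⟩ := h'
        obtain rfl := σ.eq_of_mem_parts hs ht hb hb'
        exact ⟨s, hs, ha, hc⟩ }

/-- The join `σ ⊔ τ` of two finpartitions of `univ : Finset (Fin N)` in the lattice of
finpartitions under the refinement order: its parts are the equivalence classes of the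
join of the associated setoids. -/
noncomputable def Finpartition.finJoin {N : ℕ}
    (σ τ : Finpartition (univ : Finset (Fin N))) :
    Finpartition (univ : Finset (Fin N)) :=
  letI : DecidableRel (σ.toSetoidFin ⊔ τ.toSetoidFin).r := Classical.decRel _
  Finpartition.ofSetoid (σ.toSetoidFin ⊔ τ.toSetoidFin)

/-- A pair partition: a finpartition all of whose parts have exactly two elements. -/
def IsPairPartition {N : ℕ} (σ : Finpartition (univ : Finset (Fin N))) : Prop :=
  ∀ s ∈ σ.parts, s.card = 2

instance {N : ℕ} : DecidablePred (IsPairPartition (N := N)) := fun σ =>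
  decidable_of_iff (∀ s ∈ σ.parts, s.card = 2) Iff.rfl

/-- `k : Fin d → Fin m` respects a finpartition `σ` if it is constant on every part. -/
def Respects {d m : ℕ} (k : Fin d → Fin m)
    (σ : Finpartition (univ : Finset (Fin d))) : Prop :=
  ∀ s ∈ σ.parts, ∀ a ∈ s, ∀ b ∈ s, k a = k b

instance {d m : ℕ} (k : Fin d → Fin m) : DecidablePred (Respects k) := fun σ =>
  decidable_of_iff (∀ s ∈ σ.parts, ∀ a ∈ s, ∀ b ∈ s, k a = k b) Iff.rfl

/-- The number of crossings of a pair partition: the number of (ordered, hence each counted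
once) pairs of parts `{a,b}`, `{c,d}` with `a < c < b < d`. -/
def crossings {N : ℕ} (σ : Finpartition (univ : Finset (Fin N))) : ℕ :=
  ((σ.parts ×ˢ σ.parts).filter fun st =>
    ∃ a ∈ st.1, ∃ b ∈ st.1, ∃ c ∈ st.2, ∃ d ∈ st.2, a < c ∧ c < b ∧ b < d).card

/-- The product `∏ c r t` over the parts `{r, t}` (with `r < t`) of a pair partition. -/
def pairProd {N : ℕ} (σ : Finpartition (univ : Finset (Fin N)))
    (c : Fin N → Fin N → ℂ) : ℂ :=
  ∏ s ∈ σ.parts, if h : s.Nonempty then c (s.min' h) (s.max' h) else 1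

/-!
A coarsening of a finpartition with no more parts than the finpartition itself is the
finpartition itself. Both pair partitions refine their join and have `n` parts, so if the
join has `n` parts it equals each of them.
-/

namespace Finpartition

variable {α : Type*} [DecidableEq α] {s : Finset α}

theorem eq_of_le_of_card_parts_le {P Q : Finpartition s} (hPQ : P ≤ Q)
    (hcard : #P.parts ≤ #Q.parts) : P = Q := by
  choose f hfQ hle using fun p (hp : p ∈ P.parts) => hPQ hp
  have hf_eq : ∀ p hp q b, q ∈ Q.parts → b ∈ p → b ∈ q → f p hp = q :=
    fun p hp q b hq hbp hbq => Q.eq_of_mem_parts (hfQ p hp) hq (hle p hp hbp) hbq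
  -- Every part of `Q` is hit by `f`, so the count forces `f` to be injective.
  have hinj := Finset.inj_on_of_surj_on_of_card_le f hfQ (fun q hq => by
    obtain ⟨p, hp, hpq⟩ := exists_le_of_le hPQ hq
    obtain ⟨b, hbp⟩ := P.nonempty_of_mem_parts hp
    exact ⟨p, hp, hf_eq p hp q b hq hbp (hpq hbp)⟩) hcard
  refine le_antisymm hPQ fun q hq => ?_
  obtain ⟨p, hp, hpq⟩ := exists_le_of_le hPQ hq
  obtain ⟨a, hap⟩ := P.nonempty_of_mem_parts hp
  refine ⟨p, hp, fun b hbq => ?_⟩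
  obtain ⟨p', hp', hbp'⟩ := P.exists_mem (Q.subset hq hbq)
  obtain rfl : p' = p := hinj hp' hp
    ((hf_eq p' hp' q b hq hbp' hbq).trans (hf_eq p hp q a hq hap (hpq hap)).symm)
  exact hbp'

theorem card_parts_mul_eq_card (P : Finpartition s) {k : ℕ} (h : ∀ t ∈ P.parts, #t = k) :
    #P.parts * k = #s := by
  rw [← P.sum_card_parts, Finset.sum_congr rfl h, Finset.sum_const, smul_eq_mul]

variable {N : ℕ}

theorem mem_part_finJoin_iff (σ τ : Finpartition (univ : Finset (Fin N))) {a b : Fin N} :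
    b ∈ (σ.finJoin τ).part a ↔ (σ.toSetoidFin ⊔ τ.toSetoidFin) a b := by
  let := Classical.decRel (σ.toSetoidFin ⊔ τ.toSetoidFin).r
  exact mem_part_ofSetoid_iff_rel

theorem le_finJoin {ρ σ τ : Finpartition (univ : Finset (Fin N))}
    (h : ρ.toSetoidFin ≤ σ.toSetoidFin ⊔ τ.toSetoidFin) : ρ ≤ σ.finJoin τ := by
  intro p hp
  obtain ⟨a, ha⟩ := ρ.nonempty_of_mem_parts hp
  exact ⟨_, (σ.finJoin τ).part_mem.2 (mem_univ a),
    fun b hb => (mem_part_finJoin_iff σ τ).2 (h ⟨p, hp, ha, hb⟩)⟩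

theorem finJoin_le {ρ σ τ : Finpartition (univ : Finset (Fin N))}
    (h : σ.toSetoidFin ⊔ τ.toSetoidFin ≤ ρ.toSetoidFin) : σ.finJoin τ ≤ ρ := by
  intro q hq
  obtain ⟨a, ha⟩ := (σ.finJoin τ).nonempty_of_mem_parts hq
  refine ⟨ρ.part a, ρ.part_mem.2 (mem_univ a), fun b hb => ?_⟩
  rw [← (σ.finJoin τ).part_eq_of_mem hq ha, mem_part_finJoin_iff] at hb
  obtain ⟨t, ht, hat, hbt⟩ := h hb
  rwa [ρ.part_eq_of_mem ht hat]

theorem le_finJoin_left (σ τ : Finpartition (univ : Finset (Fin N))) : σ ≤ σ.finJoin τ :=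
  le_finJoin le_sup_left

theorem le_finJoin_right (σ τ : Finpartition (univ : Finset (Fin N))) : τ ≤ σ.finJoin τ :=
  le_finJoin le_sup_right

theorem finJoin_self (σ : Finpartition (univ : Finset (Fin N))) : σ.finJoin σ = σ :=
  le_antisymm (finJoin_le (sup_idem _).le) (le_finJoin (sup_idem _).ge)

end Finpartition

theorem IsPairPartition.card_parts {n : ℕ} {σ : Finpartition (univ : Finset (Fin (2 * n)))}
    (hσ : IsPairPartition σ) : #σ.parts = n := by
  have := σ.card_parts_mul_eq_card hσ
  rw [card_univ, Fintype.card_fin] at this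
  omega

/-- the join of two pair partitions of `Fin (2*n)` has exactly `n` parts
iff the two pair partitions are equal. -/
theorem card_parts_finJoin_eq_iff (n : ℕ)
    (σ σ' : Finpartition (univ : Finset (Fin (2 * n))))
    (hσ : IsPairPartition σ) (hσ' : IsPairPartition σ') :
    (σ.finJoin σ').parts.card = n ↔ σ = σ' := by
  constructor
  · intro h
    calc σ = σ.finJoin σ' :=
          σ.eq_of_le_of_card_parts_le (σ.le_finJoin_left σ') (by rw [h, hσ.card_parts])
      _ = σ' := (σ'.eq_of_le_of_card_parts_le (σ.le_finJoin_right σ')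
          (by rw [h, hσ'.card_parts])).symm
  · rintro rfl
    rw [σ.finJoin_self, hσ.card_parts]
end

section
/- Let n be a natural number and let σ and σ' be two pair partitions of Fin (2*n). Then the sequence m ↦ (m : ℝ) ^ e, where e is the integer (number of parts of σ ⊔ σ') − n and m ranges over positive natural numbers, converges as m → ∞ to 1 if σ = σ' and to 0 if σ ≠ σ'. -/
open Finset

theorem aux_card_parts {n : ℕ} (σ : Finpartition (univ : Finset (Fin (2 * n))))
    (hσ : IsPairPartition σ) : σ.parts.card = n := by
  have h := σ.sum_card_parts
  rw [Finset.sum_congr rfl hσ] at h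
  simp [Finset.sum_const, Fintype.card_fin] at h
  omega

theorem aux_subset {N : ℕ} (σ τ : Finpartition (univ : Finset (Fin N)))
    {t : Finset (Fin N)} (ht : t ∈ (σ.finJoin τ).parts) :
    ∃ s ∈ σ.parts, s ⊆ t := by
  classical
  obtain ⟨x, hx⟩ := (σ.finJoin τ).nonempty_of_mem_parts ht
  obtain ⟨s, hs, hxs⟩ := σ.exists_mem (mem_univ x)
  refine ⟨s, hs, fun y hy => ?_⟩
  have hrel : (σ.toSetoidFin ⊔ τ.toSetoidFin).r x y :=
    le_sup_left (α := Setoid (Fin N)) (a := σ.toSetoidFin) ⟨s, hs, hxs, hy⟩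
  have : y ∈ (σ.finJoin τ).part x := by
    rw [show σ.finJoin τ =
      (letI : DecidableRel (σ.toSetoidFin ⊔ τ.toSetoidFin).r := Classical.decRel _
       Finpartition.ofSetoid (σ.toSetoidFin ⊔ τ.toSetoidFin)) from rfl]
    exact Finpartition.mem_part_ofSetoid_iff_rel.mpr hrel
  rwa [Finpartition.part_eq_of_mem _ ht hx] at this

theorem aux_subset' {N : ℕ} (σ τ : Finpartition (univ : Finset (Fin N)))
    {t : Finset (Fin N)} (ht : t ∈ (σ.finJoin τ).parts) :
    ∃ s ∈ τ.parts, s ⊆ t := by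
  classical
  obtain ⟨x, hx⟩ := (σ.finJoin τ).nonempty_of_mem_parts ht
  obtain ⟨s, hs, hxs⟩ := τ.exists_mem (mem_univ x)
  refine ⟨s, hs, fun y hy => ?_⟩
  have hrel : (σ.toSetoidFin ⊔ τ.toSetoidFin).r x y :=
    le_sup_right (α := Setoid (Fin N)) (a := σ.toSetoidFin) (b := τ.toSetoidFin) ⟨s, hs, hxs, hy⟩
  have : y ∈ (σ.finJoin τ).part x := by
    rw [show σ.finJoin τ =
      (letI : DecidableRel (σ.toSetoidFin ⊔ τ.toSetoidFin).r := Classical.decRel _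
       Finpartition.ofSetoid (σ.toSetoidFin ⊔ τ.toSetoidFin)) from rfl]
    exact Finpartition.mem_part_ofSetoid_iff_rel.mpr hrel
  rwa [Finpartition.part_eq_of_mem _ ht hx] at this

theorem aux_join_self {n : ℕ} (σ : Finpartition (univ : Finset (Fin (2 * n))))
    (hσ : IsPairPartition σ) : (σ.finJoin σ).parts.card = n := by
  classical
  have hall : ∀ t ∈ (σ.finJoin σ).parts, t.card = 2 := by
    intro t ht
    obtain ⟨s, hs, hst⟩ := aux_subset σ σ ht
    have hts : t ⊆ s := by
      intro y hy
      obtain ⟨x, hxs⟩ := σ.nonempty_of_mem_parts hs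
      have hxt : x ∈ t := hst hxs
      have : y ∈ (σ.finJoin σ).part x := by
        rwa [Finpartition.part_eq_of_mem _ ht hxt]
      have hrel : (σ.toSetoidFin ⊔ σ.toSetoidFin).r x y := by
        rw [show σ.finJoin σ =
          (letI : DecidableRel (σ.toSetoidFin ⊔ σ.toSetoidFin).r := Classical.decRel _
           Finpartition.ofSetoid (σ.toSetoidFin ⊔ σ.toSetoidFin)) from rfl] at this
        exact Finpartition.mem_part_ofSetoid_iff_rel.mp this
      rw [sup_idem] at hrel
      obtain ⟨s', hs', hxs', hys'⟩ := hrel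
      obtain rfl := σ.eq_of_mem_parts hs hs' hxs hxs'
      exact hys'
    rw [← Finset.Subset.antisymm hst hts]
    exact hσ s hs
  have h := (σ.finJoin σ).sum_card_parts
  rw [Finset.sum_congr rfl hall] at h
  simp [Finset.sum_const, Fintype.card_fin] at h
  omega

theorem aux_join_lt {n : ℕ} (σ σ' : Finpartition (univ : Finset (Fin (2 * n))))
    (hσ : IsPairPartition σ) (hσ' : IsPairPartition σ') (hne : σ ≠ σ') :
    (σ.finJoin σ').parts.card < n := by
  classical
  have hge : ∀ t ∈ (σ.finJoin σ').parts, 2 ≤ t.card := by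
    intro t ht
    obtain ⟨s, hs, hst⟩ := aux_subset σ σ' ht
    calc 2 = s.card := (hσ s hs).symm
    _ ≤ t.card := Finset.card_le_card hst
  have hsum : ∑ t ∈ (σ.finJoin σ').parts, t.card = 2 * n := by
    have h := (σ.finJoin σ').sum_card_parts
    simpa using h
  have hle : (σ.finJoin σ').parts.card ≤ n := by
    have : 2 * (σ.finJoin σ').parts.card ≤ 2 * n := by
      calc 2 * (σ.finJoin σ').parts.card = ∑ _t ∈ (σ.finJoin σ').parts, 2 := by
            simp [Finset.sum_const, mul_comm]
      _ ≤ ∑ t ∈ (σ.finJoin σ').parts, t.card := Finset.sum_le_sum hge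
      _ = 2 * n := hsum
    omega
  rcases lt_or_eq_of_le hle with h | h
  · exact h
  exfalso
  -- all parts have card 2
  have hall : ∀ t ∈ (σ.finJoin σ').parts, t.card = 2 := by
    have heq : ∑ t ∈ (σ.finJoin σ').parts, t.card = ∑ _t ∈ (σ.finJoin σ').parts, 2 := by
      simp [hsum, Finset.sum_const, h, mul_comm]
    intro t ht
    exact ((Finset.sum_eq_sum_iff_of_le hge).mp heq.symm t ht).symm
  have hsub : ∀ (τ : Finpartition (univ : Finset (Fin (2 * n)))), IsPairPartition τ →
      (∀ u ∈ (σ.finJoin σ').parts, ∃ s ∈ τ.parts, s ⊆ u) →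
      τ.parts = (σ.finJoin σ').parts := by
    intro τ hτ hcov
    have hsub' : (σ.finJoin σ').parts ⊆ τ.parts := by
      intro t ht
      obtain ⟨s, hs, hst⟩ := hcov t ht
      have : s = t := Finset.eq_of_subset_of_card_le hst (by rw [hall t ht, hτ s hs])
      rwa [← this]
    exact (Finset.eq_of_subset_of_card_le hsub'
      (by rw [aux_card_parts τ hτ, h])).symm
  have h1 := hsub σ hσ (fun u hu => aux_subset σ σ' hu)
  have h2 := hsub σ' hσ' (fun u hu => aux_subset' σ σ' hu)
  exact hne (Finpartition.ext (h1.trans h2.symm))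


open Classical in
/-- `m ^ (|σ ⊔ σ'| - n)` tends (as `m → ∞`) to `1` if `σ = σ'` and to `0`
otherwise, for pair partitions `σ, σ'` of `Fin (2*n)`. -/
theorem tendsto_pow_card_parts_finJoin_sub (n : ℕ)
    (σ σ' : Finpartition (univ : Finset (Fin (2 * n))))
    (hσ : IsPairPartition σ) (hσ' : IsPairPartition σ') :
    Filter.Tendsto
      (fun m : ℕ => (m : ℝ) ^ (((σ.finJoin σ').parts.card : ℤ) - (n : ℤ)))
      Filter.atTop (nhds (if σ = σ' then 1 else 0)) := by
  by_cases h : σ = σ'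
  · subst h
    rw [if_pos rfl, aux_join_self σ hσ]
    simp
  · rw [if_neg h]
    have hlt := aux_join_lt σ σ' hσ hσ' h
    have hneg : ((σ.finJoin σ').parts.card : ℤ) - n < 0 := by
      have : ((σ.finJoin σ').parts.card : ℤ) < n := by exact_mod_cast hlt
      omega
    exact (tendsto_zpow_atTop_zero hneg).comp tendsto_natCast_atTop_atTop
end

section
/- Let n ≥ 1 and m ≥ 1 be natural numbers and let a, b be complex-valued functions on the set of pair partitions of Fin (2*n). Then the following exact identity holds: (m : ℂ)^(-n) · ∑_{k : Fin (2*n) → Fin m} (∑_{σ a pair partition respected by k} a(σ)) · (∑_{σ' a pair partition respected by k} b(σ')) = ∑_{σ, σ' pair partitions} a(σ) · b(σ') · (m : ℂ)^(e(σ,σ')), where e(σ,σ') is the integer (number of parts of σ ⊔ σ') − n. -/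
open Finset

/-! Expanding the product and exchanging the sums, the coefficient of `a σ * b σ'` counts the
colourings `k` respecting both `σ` and `σ'`, i.e. respecting `σ ⊔ σ'`; these are the functions on
the parts of `σ ⊔ σ'`, so there are `m ^ #(σ ⊔ σ').parts` of them. -/

namespace Finpartition

variable {N : ℕ}

theorem toSetoidFin_eq_ker_part (P : Finpartition (univ : Finset (Fin N))) :
    P.toSetoidFin = Setoid.ker P.part := by
  ext x y
  rw [Setoid.ker_def, ← P.mem_part_iff_part_eq_part (mem_univ x) (mem_univ y),
    mem_part_iff_exists]
  rfl

theorem toSetoidFin_ofSetoid (s : Setoid (Fin N)) [DecidableRel s.r] :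
    (ofSetoid s).toSetoidFin = s := by
  ext x y
  rw [toSetoidFin_eq_ker_part, Setoid.ker_def,
    ← mem_part_iff_part_eq_part _ (mem_univ x) (mem_univ y), mem_part_ofSetoid_iff_rel]
  exact ⟨s.symm, s.symm⟩

theorem toSetoidFin_finJoin (σ τ : Finpartition (univ : Finset (Fin N))) :
    (σ.finJoin τ).toSetoidFin = σ.toSetoidFin ⊔ τ.toSetoidFin :=
  letI := Classical.decRel (σ.toSetoidFin ⊔ τ.toSetoidFin).r
  toSetoidFin_ofSetoid _

theorem range_part (P : Finpartition (univ : Finset (Fin N))) :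
    Set.range P.part = P.parts := by
  apply Set.Subset.antisymm
  · rintro _ ⟨x, rfl⟩
    exact P.part_mem.2 (mem_univ x)
  · intro s hs
    obtain ⟨x, -, hx⟩ := P.part_surjOn hs
    exact ⟨x, hx⟩

end Finpartition

section Respects

variable {d m : ℕ}

theorem respects_iff_le_ker (k : Fin d → Fin m) (σ : Finpartition (univ : Finset (Fin d))) :
    Respects k σ ↔ σ.toSetoidFin ≤ Setoid.ker k :=
  ⟨fun h _ _ ⟨s, hs, hx, hy⟩ => h s hs _ hx _ hy, fun h s hs _ hx _ hy => h ⟨s, hs, hx, hy⟩⟩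

theorem respects_finJoin_iff (k : Fin d → Fin m) (σ τ : Finpartition (univ : Finset (Fin d))) :
    Respects k (σ.finJoin τ) ↔ Respects k σ ∧ Respects k τ := by
  simp only [respects_iff_le_ker, Finpartition.toSetoidFin_finJoin, sup_le_iff]

theorem card_filter_respects (P : Finpartition (univ : Finset (Fin d))) :
    #{k : Fin d → Fin m | Respects k P} = m ^ #P.parts := by
  let e : {k : Fin d → Fin m // Respects k P} ≃ (P.parts → Fin m) :=
    ((Equiv.refl _).subtypeEquiv fun k => by
        rw [respects_iff_le_ker, P.toSetoidFin_eq_ker_part]; rfl).trans <|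
      (Setoid.liftEquiv _).trans <| Equiv.arrowCongr
        ((Setoid.quotientKerEquivRange P.part).trans (Equiv.setCongr P.range_part)) (.refl _)
  rw [← Fintype.card_subtype, Fintype.card_congr e, Fintype.card_fun, Fintype.card_fin,
    Fintype.card_coe]

end Respects

theorem sum_mul_sum_filter_respects {R : Type*} [CommSemiring R] {d : ℕ} (m : ℕ)
    (S T : Finset (Finpartition (univ : Finset (Fin d))))
    (a b : Finpartition (univ : Finset (Fin d)) → R) :
    ∑ k : Fin d → Fin m, (∑ σ ∈ S with Respects k σ, a σ) * ∑ τ ∈ T with Respects k τ, b τ =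
      ∑ σ ∈ S, ∑ τ ∈ T, a σ * b τ * (m : R) ^ #(σ.finJoin τ).parts := by
  simp_rw [sum_filter, sum_mul_sum, ite_zero_mul_ite_zero]
  rw [sum_comm]
  refine sum_congr rfl fun σ _ => ?_
  rw [sum_comm]
  refine sum_congr rfl fun τ _ => ?_
  simp_rw [← respects_finJoin_iff, ← sum_filter, sum_const, card_filter_respects, nsmul_eq_mul]
  push_cast
  ring

theorem moment_sum_identity_general (n m : ℕ) (hm : 1 ≤ m)
    (a b : Finpartition (univ : Finset (Fin (2 * n))) → ℂ) :
    (m : ℂ) ^ (-(n : ℤ)) *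
      ∑ k : Fin (2 * n) → Fin m,
        (∑ σ ∈ univ.filter fun σ => IsPairPartition σ ∧ Respects k σ, a σ) *
        (∑ σ' ∈ univ.filter fun σ' => IsPairPartition σ' ∧ Respects k σ', b σ') =
    ∑ σ ∈ univ.filter fun σ => IsPairPartition σ,
      ∑ σ' ∈ univ.filter fun σ' => IsPairPartition σ',
        a σ * b σ' * (m : ℂ) ^ (((σ.finJoin σ').parts.card : ℤ) - (n : ℤ)) := by
  have hm0 : (m : ℂ) ≠ 0 := Nat.cast_ne_zero.2 (by omega)
  simp_rw [← filter_filter, sum_mul_sum_filter_respects, mul_sum]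
  refine sum_congr rfl fun σ _ => sum_congr rfl fun σ' _ => ?_
  rw [zpow_sub₀ hm0, zpow_neg, zpow_natCast, zpow_natCast]
  ring

/-- exact moment identity. For `n, m ≥ 1` and complex coefficients `a, b` on
pair partitions of `Fin (2*n)`,
`m^(-n) ∑_k (∑_{σ respected by k} a σ) (∑_{σ' respected by k} b σ')
  = ∑_{σ,σ'} a σ * b σ' * m^(|σ ⊔ σ'| - n)`. -/
theorem moment_sum_identity (n m : ℕ) (hn : 1 ≤ n) (hm : 1 ≤ m)
    (a b : Finpartition (univ : Finset (Fin (2 * n))) → ℂ) :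
    (m : ℂ) ^ (-(n : ℤ)) *
      ∑ k : Fin (2 * n) → Fin m,
        (∑ σ ∈ univ.filter fun σ => IsPairPartition σ ∧ Respects k σ, a σ) *
        (∑ σ' ∈ univ.filter fun σ' => IsPairPartition σ' ∧ Respects k σ', b σ') =
    ∑ σ ∈ univ.filter fun σ => IsPairPartition σ,
      ∑ σ' ∈ univ.filter fun σ' => IsPairPartition σ',
        a σ * b σ' * (m : ℂ) ^ (((σ.finJoin σ').parts.card : ℤ) - (n : ℤ)) :=
  moment_sum_identity_general n m hm a b
end

section
/- Let n ≥ 1 be a natural number and let a, b be complex-valued functions on the set of pair partitions of Fin (2*n). Then, as m → ∞, the expression (m : ℂ)^(-n) · ∑_{k : Fin (2*n) → Fin m} (∑_{σ a pair partition respected by k} a(σ)) · (∑_{σ' a pair partition respected by k} b(σ')) converges to ∑_{σ a pair partition} a(σ) · b(σ). -/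
open Finset

namespace MomentAux
open Finset

variable {N : ℕ}

/-- the part containing `x` -/
noncomputable def partOf (σ : Finpartition (univ : Finset (Fin N))) (x : Fin N) :
    Finset (Fin N) :=
  (σ.exists_mem (mem_univ x)).choose

lemma partOf_mem (σ : Finpartition (univ : Finset (Fin N))) (x : Fin N) :
    partOf σ x ∈ σ.parts :=
  (σ.exists_mem (mem_univ x)).choose_spec.1

lemma mem_partOf (σ : Finpartition (univ : Finset (Fin N))) (x : Fin N) :
    x ∈ partOf σ x :=
  (σ.exists_mem (mem_univ x)).choose_spec.2

lemma rel_iff_partOf_eq (σ : Finpartition (univ : Finset (Fin N))) (x y : Fin N) :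
    σ.toSetoidFin x y ↔ partOf σ x = partOf σ y := by
  constructor
  · rintro ⟨s, hs, hx, hy⟩
    have h1 := σ.eq_of_mem_parts (partOf_mem σ x) hs (mem_partOf σ x) hx
    have h2 := σ.eq_of_mem_parts (partOf_mem σ y) hs (mem_partOf σ y) hy
    rw [h1, h2]
  · intro h
    exact ⟨partOf σ x, partOf_mem σ x, mem_partOf σ x, h ▸ mem_partOf σ y⟩

lemma card_quotient_toSetoidFin (σ : Finpartition (univ : Finset (Fin N))) :
    Nat.card (Quotient σ.toSetoidFin) = σ.parts.card := by
  have hb : Function.Bijective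
      (Quotient.lift (fun x => (⟨partOf σ x, partOf_mem σ x⟩ : σ.parts))
        (fun x y h => by simpa using (rel_iff_partOf_eq σ x y).mp h)) := by
    constructor
    · refine fun q q' => Quotient.inductionOn₂ q q' fun x y h => ?_
      refine Quotient.sound ((rel_iff_partOf_eq σ x y).mpr ?_)
      simpa using h
    · rintro ⟨s, hs⟩
      obtain ⟨x, hx⟩ := σ.nonempty_of_mem_parts hs
      refine ⟨Quotient.mk _ x, ?_⟩
      simp only [Quotient.lift_mk, Subtype.mk.injEq]
      exact σ.eq_of_mem_parts (partOf_mem σ x) hs (mem_partOf σ x) hx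
  rw [Nat.card_eq_of_bijective _ hb, Nat.card_eq_finsetCard]

lemma parts_card_of_pair {n : ℕ} {σ : Finpartition (univ : Finset (Fin (2 * n)))}
    (hσ : IsPairPartition σ) : σ.parts.card = n := by
  have h := σ.sum_card_parts
  rw [Finset.sum_congr rfl hσ, Finset.sum_const, smul_eq_mul, card_univ, Fintype.card_fin] at h
  omega

/-- number of functions constant on classes of a setoid -/
lemma card_filter_const {d m : ℕ} (J : Setoid (Fin d))
    [DecidablePred fun (k : Fin d → Fin m) => ∀ x y, J x y → k x = k y] :
    ((univ : Finset (Fin d → Fin m)).filter fun (k : Fin d → Fin m) =>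
        ∀ x y, J x y → k x = k y).card
      = m ^ Nat.card (Quotient J) := by
  have e : {k : Fin d → Fin m // ∀ x y, J x y → k x = k y} ≃ (Quotient J → Fin m) :=
    { toFun := fun k => Quotient.lift k.1 fun x y h => k.2 x y h
      invFun := fun g => ⟨fun x => g (Quotient.mk _ x), fun x y h => by
        simp [Quotient.sound h]⟩
      left_inv := fun k => by ext x; rfl
      right_inv := fun g => by
        ext q
        refine Quotient.inductionOn q fun x => rfl }
  rw [← Fintype.card_subtype, ← Nat.card_eq_fintype_card, Nat.card_congr e, Nat.card_fun,
    Nat.card_eq_fintype_card, Fintype.card_fin]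

lemma respects_iff {d m : ℕ} (k : Fin d → Fin m) (σ : Finpartition (univ : Finset (Fin d))) :
    Respects k σ ↔ σ.toSetoidFin ≤ Setoid.ker k := by
  constructor
  · intro h
    rw [Setoid.le_def]
    rintro x y ⟨s, hs, hx, hy⟩
    exact Setoid.ker_def.mpr (h s hs x hx y hy)
  · intro h s hs x hx y hy
    exact Setoid.ker_def.mp (Setoid.le_def.mp h ⟨s, hs, hx, hy⟩)

lemma respects_sup_iff {d m : ℕ} (k : Fin d → Fin m)
    (σ τ : Finpartition (univ : Finset (Fin d))) :
    (Respects k σ ∧ Respects k τ) ↔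
      ∀ x y, (σ.toSetoidFin ⊔ τ.toSetoidFin) x y → k x = k y := by
  rw [respects_iff, respects_iff, ← sup_le_iff]
  constructor
  · intro h x y hxy
    exact Setoid.ker_def.mp (Setoid.le_def.mp h hxy)
  · intro h
    rw [Setoid.le_def]
    intro x y hxy
    exact Setoid.ker_def.mpr (h x y hxy)

section
variable {α : Type*} [Finite α] {r s : Setoid α}

/-- factor map between quotients -/
noncomputable def factorMap (h : r ≤ s) : Quotient r → Quotient s :=
  Quotient.lift (Quotient.mk s) fun _ _ hxy => Quotient.sound (Setoid.le_def.mp h hxy)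

omit [Finite α] in
lemma factorMap_surj (h : r ≤ s) : Function.Surjective (factorMap h) := fun q =>
  Quotient.inductionOn q fun x => ⟨Quotient.mk r x, rfl⟩

lemma card_quotient_le_of_le (h : r ≤ s) :
    Nat.card (Quotient s) ≤ Nat.card (Quotient r) :=
  Nat.card_le_card_of_surjective _ (factorMap_surj h)

lemma le_of_card_quotient (h : r ≤ s)
    (hc : Nat.card (Quotient r) ≤ Nat.card (Quotient s)) : s ≤ r := by
  have hbij : Function.Bijective (factorMap h) :=
    (Nat.bijective_iff_surjective_and_card _).mpr ⟨factorMap_surj h,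
      le_antisymm hc (card_quotient_le_of_le h)⟩
  rw [Setoid.le_def]
  intro x y hxy
  have heq : factorMap h (Quotient.mk r x) = factorMap h (Quotient.mk r y) :=
    Quotient.sound hxy
  exact Quotient.exact (hbij.1 heq)

end

lemma pair_eq_of_le {n : ℕ} {σ τ : Finpartition (univ : Finset (Fin (2 * n)))}
    (hσ : IsPairPartition σ) (hτ : IsPairPartition τ)
    (h : τ.toSetoidFin ≤ σ.toSetoidFin) : τ = σ := by
  apply Finpartition.ext
  apply Finset.eq_of_subset_of_card_le
  · intro t ht
    obtain ⟨x, y, hxy, rfl⟩ := Finset.card_eq_two.mp (hτ t ht)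
    obtain ⟨s, hs, hx, hy⟩ := Setoid.le_def.mp h
      (show τ.toSetoidFin x y from ⟨_, ht, by simp, by simp⟩)
    have hsub : ({x, y} : Finset (Fin (2 * n))) ⊆ s :=
      Finset.insert_subset hx (Finset.singleton_subset_iff.mpr hy)
    have heq : ({x, y} : Finset (Fin (2 * n))) = s :=
      Finset.eq_of_subset_of_card_le hsub (by rw [hσ s hs, Finset.card_pair hxy])
    rwa [heq]
  · rw [parts_card_of_pair hσ, parts_card_of_pair hτ]

lemma card_quotient_sup_le {n : ℕ} {σ : Finpartition (univ : Finset (Fin (2 * n)))}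
    (τ : Finpartition (univ : Finset (Fin (2 * n)))) (hσ : IsPairPartition σ) :
    Nat.card (Quotient (σ.toSetoidFin ⊔ τ.toSetoidFin)) ≤ n := by
  calc Nat.card (Quotient (σ.toSetoidFin ⊔ τ.toSetoidFin))
      ≤ Nat.card (Quotient σ.toSetoidFin) := card_quotient_le_of_le le_sup_left
    _ = n := by rw [card_quotient_toSetoidFin, parts_card_of_pair hσ]

lemma eq_of_card_quotient_sup {n : ℕ} {σ τ : Finpartition (univ : Finset (Fin (2 * n)))}
    (hσ : IsPairPartition σ) (hτ : IsPairPartition τ)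
    (h : Nat.card (Quotient (σ.toSetoidFin ⊔ τ.toSetoidFin)) = n) : σ = τ := by
  have h1 : σ.toSetoidFin ⊔ τ.toSetoidFin ≤ σ.toSetoidFin :=
    le_of_card_quotient le_sup_left
      (by rw [h, card_quotient_toSetoidFin, parts_card_of_pair hσ])
  exact (pair_eq_of_le hσ hτ (le_trans le_sup_right h1)).symm

lemma tendsto_zpow_nat {z : ℤ} (hz : z < 0) :
    Filter.Tendsto (fun m : ℕ => (m : ℂ) ^ z) Filter.atTop (nhds 0) := by
  have h1 : Filter.Tendsto (fun x : ℝ => x ^ z) Filter.atTop (nhds 0) :=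
    tendsto_zpow_atTop_zero hz
  have h2 := h1.comp (tendsto_natCast_atTop_atTop (R := ℝ))
  have h3 := (Complex.continuous_ofReal.tendsto 0).comp h2
  simpa [Function.comp_def, Complex.ofReal_zpow] using h3

end MomentAux

/-- as `m → ∞`,
`m^(-n) ∑_k (∑_{σ respected by k} a σ) (∑_{σ' respected by k} b σ')` converges to
`∑_σ a σ * b σ`, the sums being over pair partitions of `Fin (2*n)`. -/
theorem tendsto_moment_sum (n : ℕ) (hn : 1 ≤ n)
    (a b : Finpartition (univ : Finset (Fin (2 * n))) → ℂ) :
    Filter.Tendsto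
      (fun m : ℕ =>
        (m : ℂ) ^ (-(n : ℤ)) *
          ∑ k : Fin (2 * n) → Fin m,
            (∑ σ ∈ univ.filter fun σ => IsPairPartition σ ∧ Respects k σ, a σ) *
            (∑ σ' ∈ univ.filter fun σ' => IsPairPartition σ' ∧ Respects k σ', b σ'))
      Filter.atTop
      (nhds (∑ σ ∈ univ.filter fun σ => IsPairPartition σ, a σ * b σ)) := by
  classical
  set PP : Finset (Finpartition (univ : Finset (Fin (2 * n)))) := univ.filter IsPairPartition
    with hPP
  set c : Finpartition (univ : Finset (Fin (2 * n))) →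
      Finpartition (univ : Finset (Fin (2 * n))) → ℕ :=
    fun σ τ => Nat.card (Quotient (σ.toSetoidFin ⊔ τ.toSetoidFin)) with hc
  have stepA : ∀ m : ℕ,
      (∑ k : Fin (2 * n) → Fin m,
        (∑ σ ∈ univ.filter fun σ => IsPairPartition σ ∧ Respects k σ, a σ) *
        (∑ σ' ∈ univ.filter fun σ' => IsPairPartition σ' ∧ Respects k σ', b σ'))
      = ∑ σ ∈ PP, ∑ τ ∈ PP, (a σ * b τ) * (m ^ c σ τ : ℂ) := by
    intro m
    have hfil : ∀ (k : Fin (2 * n) → Fin m)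
        (f : Finpartition (univ : Finset (Fin (2 * n))) → ℂ),
        (∑ σ ∈ univ.filter fun σ => IsPairPartition σ ∧ Respects k σ, f σ)
          = ∑ σ ∈ PP, if Respects k σ then f σ else 0 := by
      intro k f
      rw [← Finset.sum_filter, hPP, Finset.filter_filter]
    simp_rw [hfil, Finset.sum_mul_sum]
    rw [Finset.sum_comm]
    refine Finset.sum_congr rfl fun σ hσ => ?_
    rw [Finset.sum_comm]
    refine Finset.sum_congr rfl fun τ hτ => ?_
    have hite : ∀ k : Fin (2 * n) → Fin m,
        (if Respects k σ then a σ else 0) * (if Respects k τ then b τ else 0)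
          = if (∀ x y, (σ.toSetoidFin ⊔ τ.toSetoidFin) x y → k x = k y)
              then a σ * b τ else 0 := by
      intro k
      rw [ite_zero_mul_ite_zero]
      exact if_congr (MomentAux.respects_sup_iff k σ τ) rfl rfl
    simp_rw [hite]
    rw [← Finset.sum_filter, Finset.sum_const, MomentAux.card_filter_const, nsmul_eq_mul, hc]
    push_cast
    ring
  have key : Filter.Tendsto
      (fun m : ℕ => ∑ σ ∈ PP, ∑ τ ∈ PP, (a σ * b τ) * (m : ℂ) ^ ((c σ τ : ℤ) - n))
      Filter.atTop (nhds (∑ σ ∈ PP, a σ * b σ)) := by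
    have htarget : (∑ σ ∈ PP, a σ * b σ)
        = ∑ σ ∈ PP, ∑ τ ∈ PP, if τ = σ then a σ * b τ else 0 := by
      refine Finset.sum_congr rfl fun σ hσ => ?_
      rw [Finset.sum_ite_eq' PP σ (fun τ => a σ * b τ), if_pos hσ]
    rw [htarget]
    refine tendsto_finset_sum _ fun σ hσ => tendsto_finset_sum _ fun τ hτ => ?_
    have hσp : IsPairPartition σ := (mem_filter.mp hσ).2
    have hτp : IsPairPartition τ := (mem_filter.mp hτ).2
    by_cases h : τ = σ
    · subst h
      have hcc : c τ τ = n := by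
        rw [hc]
        simp only [sup_idem]
        rw [MomentAux.card_quotient_toSetoidFin, MomentAux.parts_card_of_pair hτp]
      rw [if_pos rfl]
      simp only [hcc, sub_self, zpow_zero, mul_one]
      exact tendsto_const_nhds
    · rw [if_neg h]
      have hlt : c σ τ < n :=
        lt_of_le_of_ne (MomentAux.card_quotient_sup_le τ hσp)
          (fun he => h (MomentAux.eq_of_card_quotient_sup hσp hτp he).symm)
      have h0 := (MomentAux.tendsto_zpow_nat (z := (c σ τ : ℤ) - n)
        (by omega)).const_mul (a σ * b τ)
      simpa using h0
  refine Filter.Tendsto.congr' ?_ key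
  filter_upwards [Filter.eventually_ge_atTop 1] with m hm
  have hm0 : (m : ℂ) ≠ 0 := Nat.cast_ne_zero.mpr (by omega)
  rw [stepA m, Finset.mul_sum]
  refine Finset.sum_congr rfl fun σ _ => ?_
  rw [Finset.mul_sum]
  refine Finset.sum_congr rfl fun τ _ => ?_
  rw [sub_eq_add_neg, zpow_add₀ hm0, zpow_natCast]
  ring
end
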